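/- arXiv:1612.05815 — 2 statements merged into one kernel-verified Lean document; each statement's English description precedes it below -/
import Mathlib

section
/- For the Lie superalgebra $\mathfrak{gl}(1|1)$ model: let $R = \{ f \in \mathbb{Z}[x^{\pm 1}, y^{\pm 1}] : f|_{x = y = t} \text{ is independent of } t \}$ (the supercharacter ring of $GL(1|1)$). Then the kernel of the ring homomorphism $f \mapsto f|_{x = y = 1}$, $R \to \mathbb{Z}$, is the free abelian group with basis $\{ (1 - x^{-1} y)\, x^a y^b : a, b \in \mathbb{Z} \}$. -/
/-!
Multiplication by `1 - x⁻¹y`, a nonzero element of the domain `ℤ[x^{±1}, y^{±1}]`, is injective,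
so it carries the monomial basis to a linearly independent family. Modulo the span of that family
`xᵃ yᵇ ≡ xᵃ⁺¹ yᵇ⁻¹`, hence `xᵃ yᵇ ≡ xᵃ⁺ᵇ` and every `f` is congruent to `f|_{x=y=t}` read with
`t = x`. On `R` this is a constant `c`, and `c = f|_{x=y=1}`, so it vanishes on the kernel.
-/

/-- The Laurent polynomial ring `ℤ[x^{±1}, y^{±1}]`, as the group algebra of `ℤ × ℤ`. -/
abbrev Laur11 : Type := AddMonoidAlgebra ℤ (ℤ × ℤ)

/-- The substitution `x = y = t`: the ring homomorphism to `ℤ[t^{±1}]` adding exponents. -/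
noncomputable def subT11 : Laur11 →+* AddMonoidAlgebra ℤ ℤ :=
  AddMonoidAlgebra.mapDomainRingHom ℤ
    (AddMonoidHom.mk' (fun p : ℤ × ℤ => p.1 + p.2) (by intro p q; simp; ring))

/-- The supercharacter ring of `GL(1|1)`: Laurent polynomials `f` for which `f|_{x=y=t}` is
independent of `t`, i.e. `f|_{x=y=t}` is a constant. -/
def R11 : Set Laur11 :=
  {f | ∃ c : ℤ, subT11 f = AddMonoidAlgebra.single (0 : ℤ) c}

/-- The evaluation `f ↦ f|_{x=y=1}` as a ring homomorphism `ℤ[x^{±1},y^{±1}] → ℤ`. -/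
noncomputable def ev11 : Laur11 →+* ℤ :=
  ((AddMonoidAlgebra.lift ℤ ℤ (ℤ × ℤ)) 1).toRingHom

/-- The elements `(1 - x⁻¹ y) xᵃ yᵇ`, the supercharacters of Kac modules for `𝔤𝔩(1|1)`. -/
noncomputable def kac11 (p : ℤ × ℤ) : Laur11 :=
  (1 - AddMonoidAlgebra.single ((-1, 1) : ℤ × ℤ) (1 : ℤ)) *
    AddMonoidAlgebra.single p (1 : ℤ)

open AddMonoidAlgebra

section Telescoping

variable {k G : Type*} [Ring k] [AddCommGroup G]

theorem single_sub_single_add_zsmul_mem_span (δ p : G) (n : ℤ) :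
    single p (1 : k) - single (p + n • δ) 1 ∈
      Submodule.span k (Set.range fun q => single q (1 : k) - single (q + δ) 1) := by
  set N := Submodule.span k (Set.range fun q => single q (1 : k) - single (q + δ) 1)
  have step (q : G) : single q (1 : k) - single (q + δ) 1 ∈ N := Submodule.subset_span ⟨q, rfl⟩
  induction n using Int.induction_on with
  | zero => simp
  | succ n ih =>
    have e : p + (n : ℤ) • δ + δ = p + ((n : ℤ) + 1) • δ := by rw [add_smul, one_smul, add_assoc]
    simpa only [sub_add_sub_cancel, e] using add_mem ih (step (p + (n : ℤ) • δ))
  | pred n ih =>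
    have e : p + (-(n : ℤ) - 1) • δ + δ = p + -(n : ℤ) • δ := by rw [sub_smul, one_smul]; abel
    simpa only [e, sub_sub_sub_cancel_right] using sub_mem ih (step (p + (-(n : ℤ) - 1) • δ))

end Telescoping

theorem subT11_single (p : ℤ × ℤ) (c : ℤ) : subT11 (single p c) = single (p.1 + p.2) c := by
  simp [subT11]

theorem ev11_single (p : ℤ × ℤ) (c : ℤ) : ev11 (single p c) = c := by
  simp [ev11, lift_single]

noncomputable def evalOne : AddMonoidAlgebra ℤ ℤ →+* ℤ :=
  ((AddMonoidAlgebra.lift ℤ ℤ ℤ) 1).toRingHom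

theorem evalOne_single (n c : ℤ) : evalOne (single n c) = c := by
  simp only [evalOne, AlgHom.toRingHom_eq_coe, RingHom.coe_coe, lift_single]
  simp

theorem evalOne_comp_subT11 : evalOne.comp subT11 = ev11 := by
  refine ringHom_ext (fun _ => ?_) (fun _ => ?_) <;>
    simp only [RingHom.comp_apply, subT11_single, evalOne_single, ev11_single]

theorem kac11_eq_sub (p : ℤ × ℤ) : kac11 p = single p 1 - single (p + (-1, 1)) 1 := by
  simp [kac11, sub_mul, single_mul_single, add_comm]

theorem subT11_kac11 (p : ℤ × ℤ) : subT11 (kac11 p) = 0 := by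
  rw [kac11_eq_sub, map_sub, subT11_single, subT11_single, sub_eq_zero]
  congr 1
  simp only [Prod.fst_add, Prod.snd_add]
  ring

theorem ev11_kac11 (p : ℤ × ℤ) : ev11 (kac11 p) = 0 := by
  rw [kac11_eq_sub, map_sub, ev11_single, ev11_single, sub_self]

theorem kac11_linearIndependent : LinearIndependent ℤ kac11 := by
  have hne : (1 - single ((-1, 1) : ℤ × ℤ) 1 : Laur11) ≠ 0 := by
    rw [sub_ne_zero, one_def, Ne, single_left_inj one_ne_zero]
    decide
  exact (AddMonoidAlgebra.basis (ℤ × ℤ) ℤ).linearIndependent.map' (LinearMap.mulLeft ℤ _)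
    (LinearMap.ker_eq_bot.2 (mul_right_injective₀ hne))

theorem sub_mapDomain_antidiagonal_mem_span_kac11 (f : Laur11) :
    f - mapDomain (fun p : ℤ × ℤ => ((p.1 + p.2, 0) : ℤ × ℤ)) f ∈
      Submodule.span ℤ (Set.range kac11) := by
  induction f using induction_linear with
  | zero => simp
  | add f g hf hg =>
    rw [mapDomain_add, add_sub_add_comm]
    exact add_mem hf hg
  | single p c =>
    have e : p + (-p.2) • ((-1, 1) : ℤ × ℤ) = (p.1 + p.2, 0) := by ext <;> simp
    have h := single_sub_single_add_zsmul_mem_span (k := ℤ) ((-1, 1) : ℤ × ℤ) p (-p.2)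
    rw [e, ← funext kac11_eq_sub] at h
    simpa only [mapDomain_single, smul_sub, smul_single, smul_eq_mul, mul_one]
      using Submodule.smul_mem _ c h

theorem mem_span_kac11_of_subT11_eq_zero {f : Laur11} (hf : subT11 f = 0) :
    f ∈ Submodule.span ℤ (Set.range kac11) := by
  have hcollapse : mapDomain (fun p : ℤ × ℤ => ((p.1 + p.2, 0) : ℤ × ℤ)) f = 0 := by
    have hcomp : mapDomain (fun p : ℤ × ℤ => ((p.1 + p.2, 0) : ℤ × ℤ)) f =
        mapDomain (fun n : ℤ => ((n, 0) : ℤ × ℤ)) (subT11 f) :=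
      LinearMap.congr_fun (mapDomainLinearMap_comp (R := ℤ) (S := ℤ)
        (fun p : ℤ × ℤ => p.1 + p.2) (fun n : ℤ => ((n, 0) : ℤ × ℤ))) f
    rw [hcomp, hf, mapDomain_zero]
  simpa [hcollapse] using sub_mapDomain_antidiagonal_mem_span_kac11 f

/-- the kernel of the evaluation `f ↦ f|_{x=y=1}` on the supercharacter ring
`R` of `GL(1|1)` is the free abelian group with basis `{(1 - x⁻¹y) xᵃ yᵇ : a, b ∈ ℤ}`. -/
theorem kernel_gl11 :
    (∀ p : ℤ × ℤ, kac11 p ∈ R11 ∧ ev11 (kac11 p) = 0) ∧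
    LinearIndependent ℤ kac11 ∧
    (∀ f ∈ R11, ev11 f = 0 → f ∈ Submodule.span ℤ (Set.range kac11)) := by
  refine ⟨fun p => ⟨⟨0, by rw [subT11_kac11, single_zero]⟩, ev11_kac11 p⟩,
    kac11_linearIndependent, ?_⟩
  rintro f ⟨c, hc⟩ hev
  have hc0 : c = 0 := by
    rw [← evalOne_single 0 c, ← hc, ← RingHom.comp_apply, evalOne_comp_subT11, hev]
  exact mem_span_kac11_of_subT11_eq_zero (by rw [hc, hc0, single_zero])
end

section
/- Kernel of the Duflo–Serganova evaluation for $GL(m|n)$: let $\mathcal{J}_{m,n}$ be the ring of $S_m\times S_n$-invariant Laurent polynomials $f$ in $x_1,\ldots,x_m,y_1,\ldots,y_n$ with $f|_{x_1=y_1=t}$ independent of $t$. If $f \in \mathcal{J}_{m,n}$ satisfies $f|_{x_1 = y_1 = 1} = 0$, then $f$ is divisible in the Laurent polynomial ring by $\prod_{i=1}^m \prod_{j=1}^n (1 - x_i^{-1} y_j)$, and the quotient is an $S_m \times S_n$-invariant Laurent polynomial. -/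
/-!
Substituting `y_j ↦ x_i` is a ring endomorphism of the Laurent polynomial ring whose kernel is
the principal ideal generated by `1 - x_i⁻¹ y_j`; since the ring is a domain, these elements are
prime, and distinct pairs `(i, j)` give non-associated primes. For `f ∈ 𝒥`, the value
`f|_{x₁ = y₁ = t}` does not depend on `t`, so it equals `f|_{x₁ = y₁ = 1} = 0`; in particular
`f|_{y₁ = x₁} = 0` and `1 - x₁⁻¹ y₁` divides `f`. By symmetry every `1 - x_i⁻¹ y_j` divides `f`,
hence so does their product, and the quotient is symmetric because the product is.
-/

/-- The exponent lattice for Laurent polynomials in `x₁,…,x_m, y₁,…,y_n`. -/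
abbrev XLat (m n : ℕ) : Type := (Fin m ⊕ Fin n) → ℤ

/-- The Laurent polynomial ring `ℤ[x₁^{±1},…,x_m^{±1},y₁^{±1},…,y_n^{±1}]`,
realized as the group algebra of the exponent lattice. -/
abbrev Laur (m n : ℕ) : Type := AddMonoidAlgebra ℤ (XLat m n)

/-- The action of a pair of permutations `(σ, τ) ∈ S_m × S_n` on Laurent polynomials,
permuting the `x` variables by `σ` and the `y` variables by `τ`. -/
noncomputable def permHom {m n : ℕ} (σ : Equiv.Perm (Fin m)) (τ : Equiv.Perm (Fin n)) :
    Laur m n →+* Laur m n :=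
  AddMonoidAlgebra.mapDomainRingHom ℤ
    (AddMonoidHom.mk' (fun v : XLat m n => v ∘ (Equiv.sumCongr σ τ)) (fun _ _ => rfl))

/-- A Laurent polynomial is doubly symmetric if it is invariant under permuting
the `x`'s among themselves and the `y`'s among themselves. -/
def IsSym {m n : ℕ} (f : Laur m n) : Prop :=
  ∀ (σ : Equiv.Perm (Fin m)) (τ : Equiv.Perm (Fin n)), permHom σ τ f = f

/-- The additive map on exponents corresponding to the substitution `x_i = y_j = t`:
the `t`-exponent is `v(x_i) + v(y_j)`, and the exponents of `x_i`, `y_j` are set to zero. -/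
noncomputable def subTexp (m n : ℕ) (i : Fin m) (j : Fin n) : XLat m n →+ ℤ × XLat m n :=
  AddMonoidHom.mk'
    (fun v => (v (Sum.inl i) + v (Sum.inr j),
      fun a => if a = Sum.inl i ∨ a = Sum.inr j then 0 else v a))
    (by
      intro v w
      refine Prod.ext ?_ ?_
      · simp only [Pi.add_apply, Prod.fst_add]; ring
      · funext a
        by_cases h : a = Sum.inl i ∨ a = Sum.inr j <;> simp [h])

/-- The ring homomorphism substituting `x_i = y_j = t`, with values in the Laurent
polynomial ring with an extra variable `t` (whose exponent is the first coordinate). -/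
noncomputable def subT {m n : ℕ} (i : Fin m) (j : Fin n) :
    Laur m n →+* AddMonoidAlgebra ℤ (ℤ × XLat m n) :=
  AddMonoidAlgebra.mapDomainRingHom ℤ (subTexp m n i j)

/-- The inclusion of Laurent polynomials not involving `t` into the ring with `t`. -/
noncomputable def inclT (m n : ℕ) : Laur m n →+* AddMonoidAlgebra ℤ (ℤ × XLat m n) :=
  AddMonoidAlgebra.mapDomainRingHom ℤ (AddMonoidHom.inr ℤ (XLat m n))

/-- The supersymmetry condition: the substitution `x_i = y_j = t` is independent of `t`,
i.e. the result lies in the subring of elements not involving `t`. -/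
def SuperCond {m n : ℕ} (f : Laur m n) : Prop :=
  ∀ (i : Fin m) (j : Fin n), subT i j f ∈ Set.range (inclT m n)

/-- The ring `𝒥_{m,n}` of supersymmetric Laurent polynomials, as a set. -/
def Jset (m n : ℕ) : Set (Laur m n) := {f | IsSym f ∧ SuperCond f}

/-- The ring homomorphism `f ↦ f|_{x₁ = y₁ = 1}`, substituting `1` for `x₁` and `y₁`
(realized on exponents by dropping the corresponding coordinates and reindexing the
remaining variables). -/
noncomputable def subOne (m n : ℕ) : Laur (m+1) (n+1) →+* Laur m n :=
  AddMonoidAlgebra.mapDomainRingHom ℤ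
    (AddMonoidHom.mk' (fun v : XLat (m+1) (n+1) => v ∘ Sum.map Fin.succ Fin.succ)
      (fun _ _ => rfl))

/-- The exponent vector of the monomial `x_i^{-1} y_j`. -/
def xinvy {m n : ℕ} (i : Fin m) (j : Fin n) : XLat m n :=
  fun a => if a = Sum.inl i then -1 else if a = Sum.inr j then 1 else 0

open AddMonoidAlgebra

theorem Finset.prod_dvd_of_prime_of_pairwise_not_dvd {ι M₀ : Type*} [CommMonoidWithZero M₀]
    {s : Finset ι} {p : ι → M₀} {x : M₀} (hp : ∀ i ∈ s, Prime (p i))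
    (hs : (s : Set ι).Pairwise fun i j => ¬ p i ∣ p j) (hx : ∀ i ∈ s, p i ∣ x) :
    ∏ i ∈ s, p i ∣ x := by
  classical
  induction s using Finset.induction_on generalizing x with
  | empty => simp
  | insert a s ha ih =>
    obtain ⟨y, rfl⟩ := hx a (mem_insert_self a s)
    rw [prod_insert ha]
    refine mul_dvd_mul_left _ (ih (fun i hi => hp i (mem_insert_of_mem hi))
      (hs.mono (by simp)) fun i hi => ?_)
    exact ((hp i (mem_insert_of_mem hi)).dvd_or_dvd (hx i (mem_insert_of_mem hi))).resolve_left
      (hs (mem_insert_of_mem hi) (mem_insert_self a s) (ne_of_mem_of_not_mem hi ha))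

namespace AddMonoidHom

variable {G : Type*} [AddCommGroup G]

/-- The projection onto `ker c` along `e` when `c e = 1`. -/
def projAlong (c : G →+ ℤ) (e : G) : G →+ G :=
  AddMonoidHom.id G - (zmultiplesHom G e).comp c

@[simp]
theorem projAlong_apply (c : G →+ ℤ) (e v : G) : c.projAlong e v = v - c v • e := rfl

end AddMonoidHom

namespace AddMonoidAlgebra

variable {R G : Type*} [CommRing R] [AddCommGroup G]

theorem one_sub_single_dvd_one_sub_single_zsmul (e : G) (k : ℤ) :
    (1 - single e (1 : R)) ∣ 1 - single (k • e) 1 := by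
  have hnat (N : ℕ) : (1 - single e (1 : R)) ∣ 1 - single ((N : ℤ) • e) 1 := by
    simpa [single_pow, natCast_zsmul] using
      sub_dvd_pow_sub_pow (1 : AddMonoidAlgebra R G) (single e 1) N
  obtain ⟨N, rfl | rfl⟩ := Int.eq_nat_or_neg k
  · exact hnat N
  · have h : 1 - single (-(N : ℤ) • e) (1 : R) =
        -single (-(N : ℤ) • e) 1 * (1 - single ((N : ℤ) • e) 1) := by
      rw [mul_sub, mul_one, neg_mul, single_mul_single, neg_smul, neg_add_cancel, mul_one,
        ← one_def]
      abel
    exact h ▸ dvd_mul_of_dvd_right (hnat N) _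

theorem one_sub_single_ne_zero [Nontrivial R] {v : G} (hv : v ≠ 0) :
    (1 : AddMonoidAlgebra R G) - single v 1 ≠ 0 := by
  rw [sub_ne_zero, one_def]
  exact fun h => hv (single_left_injective one_ne_zero h).symm

variable {c : G →+ ℤ} {e : G}

theorem one_sub_single_dvd_sub_mapDomain_projAlong (x : AddMonoidAlgebra R G) :
    (1 - single e 1) ∣ x - mapDomain (c.projAlong e) x := by
  induction x using induction_linear with
  | zero => simp
  | add x y hx hy => rw [mapDomain_add, add_sub_add_comm]; exact dvd_add hx hy
  | single v r =>
    have h : single (c.projAlong e v) r * (1 - single (c v • e) 1) =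
        single (c.projAlong e v) r - single v r := by
      rw [mul_sub, mul_one, single_mul_single, mul_one, c.projAlong_apply, sub_add_cancel]
    rw [mapDomain_single, dvd_sub_comm, ← h]
    exact dvd_mul_of_dvd_right (one_sub_single_dvd_one_sub_single_zsmul e (c v)) _

theorem mapDomainRingHom_projAlong_one_sub_single (he : c e = 1) :
    mapDomainRingHom R (c.projAlong e) (1 - single e 1) = 0 := by
  rw [map_sub, map_one, mapDomainRingHom_apply, mapDomain_single, c.projAlong_apply, he,
    one_smul, sub_self, ← one_def, sub_self]

theorem ker_mapDomainRingHom_projAlong (he : c e = 1) :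
    RingHom.ker (mapDomainRingHom R (c.projAlong e)) = Ideal.span {1 - single e 1} := by
  ext x
  rw [RingHom.mem_ker, Ideal.mem_span_singleton]
  constructor
  · intro hx
    have h := one_sub_single_dvd_sub_mapDomain_projAlong (c := c) (e := e) x
    rwa [← mapDomainRingHom_apply, hx, sub_zero] at h
  · rintro ⟨y, rfl⟩
    rw [map_mul, mapDomainRingHom_projAlong_one_sub_single he, zero_mul]

theorem one_sub_single_dvd_iff (he : c e = 1) (x : AddMonoidAlgebra R G) :
    (1 - single e 1) ∣ x ↔ mapDomainRingHom R (c.projAlong e) x = 0 := by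
  rw [← Ideal.mem_span_singleton, ← ker_mapDomainRingHom_projAlong he, RingHom.mem_ker]

theorem prime_one_sub_single [Nontrivial R] [IsDomain (AddMonoidAlgebra R G)] (he : c e = 1) :
    Prime (1 - single e (1 : R)) := by
  have he0 : e ≠ 0 := by rintro rfl; simp at he
  rw [← Ideal.span_singleton_prime (one_sub_single_ne_zero he0),
    ← ker_mapDomainRingHom_projAlong he]
  exact RingHom.ker_isPrime _

end AddMonoidAlgebra

section Laurent

variable {m n : ℕ}

/-- The substitution `y_j ↦ x_i`. -/
noncomputable def substYX (i : Fin m) (j : Fin n) : Laur m n →+* Laur m n :=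
  mapDomainRingHom ℤ ((Pi.evalAddMonoidHom (fun _ => ℤ) (Sum.inr j)).projAlong (xinvy i j))

theorem xinvy_inr_self (i : Fin m) (j : Fin n) : xinvy i j (Sum.inr j) = 1 := by
  simp [xinvy]

theorem one_sub_single_xinvy_dvd_iff (i : Fin m) (j : Fin n) (f : Laur m n) :
    (1 - single (xinvy i j) 1) ∣ f ↔ substYX i j f = 0 :=
  one_sub_single_dvd_iff (xinvy_inr_self i j) f

theorem prime_one_sub_single_xinvy (i : Fin m) (j : Fin n) :
    Prime (1 - single (xinvy i j) (1 : ℤ)) :=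
  prime_one_sub_single (c := Pi.evalAddMonoidHom (fun _ => ℤ) (Sum.inr j)) (xinvy_inr_self i j)

theorem not_one_sub_single_xinvy_dvd {q r : Fin m × Fin n} (h : q ≠ r) :
    ¬ (1 - single (xinvy q.1 q.2) (1 : ℤ)) ∣ 1 - single (xinvy r.1 r.2) 1 := by
  obtain ⟨k, l⟩ := q
  obtain ⟨i, j⟩ := r
  rw [one_sub_single_xinvy_dvd_iff, substYX, map_sub, map_one, mapDomainRingHom_apply,
    mapDomain_single]
  refine one_sub_single_ne_zero fun h0 => ?_
  rw [AddMonoidHom.projAlong_apply, sub_eq_zero] at h0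
  have hx := congrFun h0 (Sum.inl i)
  have hy := congrFun h0 (Sum.inr j)
  by_cases hjl : j = l <;> by_cases hik : i = k <;> simp_all [xinvy]

theorem xinvy_comp_sumCongr (σ : Equiv.Perm (Fin m)) (τ : Equiv.Perm (Fin n)) (i : Fin m)
    (j : Fin n) : xinvy i j ∘ Equiv.sumCongr σ τ = xinvy (σ.symm i) (τ.symm j) := by
  funext a
  rcases a with a | a <;> simp [xinvy, ← Equiv.eq_symm_apply]

theorem permHom_one_sub_single_xinvy (σ : Equiv.Perm (Fin m)) (τ : Equiv.Perm (Fin n))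
    (i : Fin m) (j : Fin n) :
    permHom σ τ (1 - single (xinvy i j) 1) = 1 - single (xinvy (σ.symm i) (τ.symm j)) 1 := by
  rw [map_sub, map_one, permHom, mapDomainRingHom_apply, mapDomain_single]
  exact congrArg (fun v => 1 - single v 1) (xinvy_comp_sumCongr σ τ i j)

theorem IsSym.one_sub_single_xinvy_dvd {f : Laur m n} (hf : IsSym f) {i : Fin m} {j : Fin n}
    (h : (1 - single (xinvy i j) 1) ∣ f) (k : Fin m) (l : Fin n) :
    (1 - single (xinvy k l) 1) ∣ f := by
  have h' := map_dvd (permHom (Equiv.swap i k) (Equiv.swap j l)) h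
  rwa [hf, permHom_one_sub_single_xinvy, Equiv.symm_swap, Equiv.symm_swap,
    Equiv.swap_apply_left, Equiv.swap_apply_left] at h'

theorem isSym_prod_one_sub_single_xinvy :
    IsSym (∏ i : Fin m, ∏ j : Fin n, (1 - single (xinvy i j) (1 : ℤ))) := by
  intro σ τ
  simp only [map_prod, permHom_one_sub_single_xinvy]
  rw [Equiv.prod_comp σ.symm fun i => ∏ j, (1 - single (xinvy i (τ.symm j)) (1 : ℤ))]
  exact Finset.prod_congr rfl fun i _ => Equiv.prod_comp τ.symm fun j => 1 - single (xinvy i j) 1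

theorem IsSym.of_mul_left {p g : Laur m n} (hp : IsSym p) (hp0 : p ≠ 0) (h : IsSym (p * g)) :
    IsSym g := fun σ τ =>
  mul_left_cancel₀ hp0 (by rw [← h σ τ, map_mul, hp σ τ])

end Laurent

section Supersymmetry

variable {m n : ℕ}

theorem substYX_eq_zero_of_subT_eq_zero {i : Fin m} {j : Fin n} {f : Laur m n}
    (h : subT i j f = 0) : substYX i j f = 0 := by
  -- `y_j ↦ x_i` is `x_i = y_j = t` followed by `t ↦ x_i`
  have hfactor : substYX i j =
      (mapDomainRingHom ℤ ((zmultiplesHom _ (Pi.single (Sum.inl i) 1)).coprod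
        (AddMonoidHom.id (XLat m n)))).comp (subT i j) := by
    rw [substYX, subT, ← mapDomainRingHom_comp]
    congr 1
    refine AddMonoidHom.ext fun v => funext fun a => ?_
    by_cases hi : a = Sum.inl i
    · subst hi; simp [subTexp, xinvy]
    · by_cases hj : a = Sum.inr j
      · subst hj; simp [subTexp, xinvy]
      · simp [subTexp, xinvy, hi, hj]
  rw [hfactor, RingHom.comp_apply, h, map_zero]

theorem subT_zero_zero_eq_zero {f : Laur (m+1) (n+1)} (hf : SuperCond f)
    (h0 : subOne m n f = 0) : subT 0 0 f = 0 := by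
  obtain ⟨g, hg⟩ := hf 0 0
  have hincl : (mapDomainRingHom ℤ (AddMonoidHom.snd ℤ _)).comp (inclT (m+1) (n+1)) =
      RingHom.id _ := by
    rw [inclT, ← mapDomainRingHom_comp, AddMonoidHom.snd_comp_inr, mapDomainRingHom_id]
  -- `t ↦ 1` after `x₁ = y₁ = t` is `x₁ = y₁ = 1`, followed by re-embedding the exponents
  have hfactor : (mapDomainRingHom ℤ (AddMonoidHom.snd ℤ _)).comp (subT 0 0) =
      (mapDomainRingHom ℤ (Function.ExtendByZero.hom ℤ (Sum.map Fin.succ Fin.succ))).comp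
        (subOne m n) := by
    rw [subT, subOne, ← mapDomainRingHom_comp, ← mapDomainRingHom_comp]
    congr 1
    refine AddMonoidHom.ext fun v => funext fun a => ?_
    have hinj : Function.Injective (Sum.map (Fin.succ : Fin m → _) (Fin.succ : Fin n → _)) :=
      Sum.map_injective.2 ⟨Fin.succ_injective _, Fin.succ_injective _⟩
    by_cases ha : ∃ b, Sum.map Fin.succ Fin.succ b = a
    · obtain ⟨b, rfl⟩ := ha
      simp only [AddMonoidHom.comp_apply, Function.ExtendByZero.hom_apply, hinj.extend_apply]
      rcases b with b | b <;> simp [subTexp, Fin.succ_ne_zero]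
    · rcases a with a | a <;> cases a using Fin.cases <;> simp_all [subTexp]
  have hg0 : g = 0 := by
    have h1 := RingHom.congr_fun hincl g
    have h2 := RingHom.congr_fun hfactor f
    simp only [RingHom.comp_apply, RingHom.id_apply] at h1 h2
    rw [← h1, hg, h2, h0, map_zero]
  rw [← hg, hg0, map_zero]

end Supersymmetry

/-- if `f ∈ 𝒥_{m,n}` satisfies `f|_{x₁ = y₁ = 1} = 0`, then `f` is divisible
in the Laurent polynomial ring by `∏ᵢ∏ⱼ (1 - x_i^{-1} y_j)`, and the quotient is an
`S_m × S_n`-invariant Laurent polynomial. -/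
theorem kernel_divisibility (m n : ℕ) (f : Laur (m+1) (n+1))
    (hf : f ∈ Jset (m+1) (n+1)) (h0 : subOne m n f = 0) :
    ∃ g : Laur (m+1) (n+1), IsSym g ∧
      f = (∏ i : Fin (m+1), ∏ j : Fin (n+1),
            (1 - AddMonoidAlgebra.single (xinvy i j) (1 : ℤ))) * g := by
  obtain ⟨hsym, hsuper⟩ := hf
  have hdvd₀₀ : (1 - single (xinvy 0 0) 1) ∣ f := (one_sub_single_xinvy_dvd_iff 0 0 f).2
    (substYX_eq_zero_of_subT_eq_zero (subT_zero_zero_eq_zero hsuper h0))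
  have hdvd : (∏ i : Fin (m+1), ∏ j : Fin (n+1), (1 - single (xinvy i j) (1 : ℤ))) ∣ f := by
    rw [← Fintype.prod_prod_type']
    exact Finset.prod_dvd_of_prime_of_pairwise_not_dvd
      (fun q _ => prime_one_sub_single_xinvy q.1 q.2)
      (fun _ _ _ _ hqr => not_one_sub_single_xinvy_dvd hqr)
      (fun q _ => hsym.one_sub_single_xinvy_dvd hdvd₀₀ q.1 q.2)
  obtain ⟨g, rfl⟩ := hdvd
  have hprod_ne_zero :
      (∏ i : Fin (m+1), ∏ j : Fin (n+1), (1 - single (xinvy i j) (1 : ℤ))) ≠ 0 :=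
    Finset.prod_ne_zero_iff.2 fun i _ => Finset.prod_ne_zero_iff.2 fun j _ =>
      (prime_one_sub_single_xinvy i j).ne_zero
  exact ⟨g, isSym_prod_one_sub_single_xinvy.of_mul_left hprod_ne_zero hsym, rfl⟩
end
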